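/- With the combinatorial and matrix setup below, the subspace n₀,₀ of M_r(k) is closed under multiplication (n₀,₀·n₀,₀ ⊆ n₀,₀) and is nilpotent with n₀,₀^{max(c,d)} = 0. -/

import Mathlib

namespace PaperPurity

variable {r : ℕ}

/-- `J₊ = {(i,j) : j ≤ c < i}` (translated to 0-based indexing on `Fin r`). -/
def Jp (c : ℕ) : Set (Fin r × Fin r) := {q | q.2.val < c ∧ c ≤ q.1.val}

/-- `J₀ = {(i,j) : i,j ≤ c or i,j > c}` (0-based). -/
def Jz (c : ℕ) : Set (Fin r × Fin r) :=
  {q | (q.1.val < c ∧ q.2.val < c) ∨ (c ≤ q.1.val ∧ c ≤ q.2.val)}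

/-- `J₋ = {(i,j) : i ≤ c < j}` (0-based). -/
def Jm (c : ℕ) : Set (Fin r × Fin r) := {q | q.1.val < c ∧ c ≤ q.2.val}

/-- Apply `π^s` to both entries of a pair. -/
def iter (π : Equiv.Perm (Fin r)) (s : ℕ) (q : Fin r × Fin r) : Fin r × Fin r :=
  ((π ^ s) q.1, (π ^ s) q.2)

/-- The π-order `ν(i,j)`: the smallest positive `ν` with `(π^ν i, π^ν j) ∈ J₊ ∪ J₋`.
On `J₀,₀` this `sInf` also computes the extended π-order `ν(i,j) - s`. -/
noncomputable def nu (π : Equiv.Perm (Fin r)) (c : ℕ) (q : Fin r × Fin r) : ℕ :=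
  sInf {ν : ℕ | 0 < ν ∧ iter π ν q ∈ Jp c ∪ Jm c}

/-- `J₋,₁`. -/
def Jm1 (π : Equiv.Perm (Fin r)) (c : ℕ) : Set (Fin r × Fin r) :=
  {q | q ∈ Jm c ∧ iter π (nu π c q) q ∈ Jp c}

/-- `J₊,₁`. -/
def Jp1 (π : Equiv.Perm (Fin r)) (c : ℕ) : Set (Fin r × Fin r) :=
  {q' | ∃ q ∈ Jm1 π c, q' = iter π (nu π c q) q}

/-- `J₊,₂ = J₊ \ J₊,₁`. -/
def Jp2 (π : Equiv.Perm (Fin r)) (c : ℕ) : Set (Fin r × Fin r) := Jp c \ Jp1 π c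

/-- `J₀,₀`. -/
def Jz0 (π : Equiv.Perm (Fin r)) (c : ℕ) : Set (Fin r × Fin r) :=
  {q' | ∃ q ∈ Jm1 π c, ∃ s : ℕ, 1 ≤ s ∧ s ≤ nu π c q - 1 ∧ q' = iter π s q}

/-- The π-level `η`. -/
noncomputable def eta (π : Equiv.Perm (Fin r)) (c : ℕ) (q' : Fin r × Fin r) : ℕ :=
  sInf {s : ℕ | ∃ q ∈ Jm1 π c, s ≤ nu π c q ∧ q' = iter π s q}

/-- Membership in `Γ` for the tuple `(γ 1, …, γ s)`. -/
def inGamma (π : Equiv.Perm (Fin r)) (c s : ℕ) (γ : ℕ → Fin r) : Prop :=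
  2 ≤ s ∧ (∀ ℓ : ℕ, 1 ≤ ℓ → ℓ ≤ s - 2 → (γ ℓ, γ (ℓ + 1)) ∈ Jz0 π c) ∧
    (γ (s - 1), γ s) ∈ Jp2 π c

/-- Membership in `Δ` for the tuple `(γ 1, …, γ s)`. -/
def inDelta (π : Equiv.Perm (Fin r)) (c s : ℕ) (γ : ℕ → Fin r) : Prop :=
  3 ≤ s ∧ inGamma π c (s - 1) γ ∧ (γ (s - 1), γ s) ∈ Jz0 π c

/-- `n_t(γ)`. -/
noncomputable def nCount (π : Equiv.Perm (Fin r)) (c s : ℕ) (γ : ℕ → Fin r) (t : ℕ) : ℕ :=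
  Set.ncard {ℓ : ℕ | 1 ≤ ℓ ∧ ℓ ≤ s - 1 ∧ (γ ℓ, γ (ℓ + 1)) ∈ Jz0 π c ∧
    nu π c (γ ℓ, γ (ℓ + 1)) = t}

/-- `κ(γ) = Σ_{t ≥ 1} n_t(γ) p^{-t} ∈ ℚ`. -/
noncomputable def kappa (p : ℕ) (π : Equiv.Perm (Fin r)) (c s : ℕ) (γ : ℕ → Fin r) : ℚ :=
  ∑ᶠ t : ℕ, if 1 ≤ t then (nCount π c s γ t : ℚ) / (p : ℚ) ^ t else 0

/-- Membership in `Γ₁`. -/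
def inGamma1 (π : Equiv.Perm (Fin r)) (c s : ℕ) (γ : ℕ → Fin r) : Prop :=
  inGamma π c s γ ∧ (γ 1, γ s) ∈ Jp1 π c ∧ (γ 2, γ s) ∉ Jp1 π c

/-- Membership in `Δ₁`. -/
def inDelta1 (π : Equiv.Perm (Fin r)) (c s : ℕ) (γ : ℕ → Fin r) : Prop :=
  inDelta π c s γ ∧ (γ 1, γ s) ∈ Jp1 π c ∧ (γ 2, γ s) ∉ Jp1 π c

/-- `κ(π) = max {κ(γ) : γ ∈ Γ₁ ∪ Δ₁}` (and `0` if `Γ₁ ∪ Δ₁ = ∅`); realized as a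
supremum in `ℝ` of the (finite) set of values together with `0`. -/
noncomputable def kappaPerm (p : ℕ) (π : Equiv.Perm (Fin r)) (c : ℕ) : ℝ :=
  sSup (insert (0 : ℝ) {x : ℝ | ∃ (s : ℕ) (γ : ℕ → Fin r),
    (inGamma1 π c s γ ∨ inDelta1 π c s γ) ∧ x = ((kappa p π c s γ : ℚ) : ℝ)})

/-- The `k`-span of the matrix units `E_{i,j}`, `(i,j) ∈ S`. -/
def spanUnits (k : Type*) [Field k] {r : ℕ} (S : Set (Fin r × Fin r)) :
    Submodule k (Matrix (Fin r) (Fin r) k) :=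
  Submodule.span k ((fun q : Fin r × Fin r => Matrix.single q.1 q.2 (1 : k)) '' S)


/-! ### Auxiliary lemmas -/

section Aux

lemma iter_iter (π : Equiv.Perm (Fin r)) (a b : ℕ) (q : Fin r × Fin r) :
    iter π a (iter π b q) = iter π (a + b) q := by
  simp [iter, pow_add, Equiv.Perm.mul_apply]

lemma iter_inv_iter (π : Equiv.Perm (Fin r)) (v s : ℕ) (h : v ≤ s) (q : Fin r × Fin r) :
    iter π⁻¹ v (iter π s q) = iter π (s - v) q := by
  have key : ∀ x : Fin r, (π⁻¹ ^ v) ((π ^ s) x) = (π ^ (s - v)) x := by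
    intro x
    have h1 : (π ^ s) x = (π ^ v) ((π ^ (s - v)) x) := by
      rw [← Equiv.Perm.mul_apply, ← pow_add]
      congr 2
      omega
    rw [h1, inv_pow]
    exact Equiv.symm_apply_apply _ _
  simp only [iter]
  rw [key, key]

lemma iter_iter_inv (π : Equiv.Perm (Fin r)) (v s : ℕ) (h : v ≤ s) (q : Fin r × Fin r) :
    iter π v (iter π⁻¹ s q) = iter π⁻¹ (s - v) q := by
  have := iter_inv_iter π⁻¹ v s h q
  rwa [inv_inv] at this

lemma iter_apply_inv (π : Equiv.Perm (Fin r)) (u : ℕ) (q : Fin r × Fin r) :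
    iter π u (iter π⁻¹ u q) = q := by
  have key : ∀ x : Fin r, (π ^ u) ((π⁻¹ ^ u) x) = x := by
    intro x
    rw [inv_pow]
    exact Equiv.apply_symm_apply _ _
  simp [iter, key]

lemma iter_gt_inv (π : Equiv.Perm (Fin r)) (v u : ℕ) (h : u ≤ v) (q : Fin r × Fin r) :
    iter π v (iter π⁻¹ u q) = iter π (v - u) q := by
  have h1 : iter π v (iter π⁻¹ u q) = iter π (v - u) (iter π u (iter π⁻¹ u q)) := by
    rw [iter_iter, Nat.sub_add_cancel h]
  rw [h1, iter_apply_inv]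

lemma mem_Jz_of_not_mem (c : ℕ) (q : Fin r × Fin r) (h : q ∉ Jp c ∪ Jm c) : q ∈ Jz c := by
  simp only [Jp, Jm, Jz, Set.mem_union, Set.mem_setOf_eq, not_or] at *
  omega

lemma not_mem_of_mem_Jz (c : ℕ) (q : Fin r × Fin r) (h : q ∈ Jz c) : q ∉ Jp c ∪ Jm c := by
  simp only [Jp, Jm, Jz, Set.mem_union, Set.mem_setOf_eq, not_or] at *
  omega

/-- Forward first-exit condition. -/
def Fwd (π : Equiv.Perm (Fin r)) (c : ℕ) (q : Fin r × Fin r) : Prop :=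
  ∃ w, 1 ≤ w ∧ iter π w q ∈ Jp c ∧ ∀ v, 1 ≤ v → v < w → iter π v q ∈ Jz c

/-- Backward first-exit condition. -/
def Bwd (π : Equiv.Perm (Fin r)) (c : ℕ) (q : Fin r × Fin r) : Prop :=
  ∃ u, 1 ≤ u ∧ iter π⁻¹ u q ∈ Jm c ∧ ∀ v, 1 ≤ v → v < u → iter π⁻¹ v q ∈ Jz c

/-- Intrinsic characterization of membership in `J₀,₀`. -/
def Pq (π : Equiv.Perm (Fin r)) (c : ℕ) (q : Fin r × Fin r) : Prop :=
  q ∈ Jz c ∧ Fwd π c q ∧ Bwd π c q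

lemma nu_mem (π : Equiv.Perm (Fin r)) (c : ℕ) (q : Fin r × Fin r) (hq : q ∈ Jm c) :
    0 < nu π c q ∧ iter π (nu π c q) q ∈ Jp c ∪ Jm c := by
  have hne : {ν : ℕ | 0 < ν ∧ iter π ν q ∈ Jp c ∪ Jm c}.Nonempty := by
    refine ⟨orderOf π, orderOf_pos π, ?_⟩
    have h1 : π ^ orderOf π = 1 := pow_orderOf_eq_one π
    have : iter π (orderOf π) q = q := by simp [iter, h1]
    rw [this]
    exact Set.mem_union_right _ hq
  exact Nat.sInf_mem hne

lemma nu_min (π : Equiv.Perm (Fin r)) (c : ℕ) (q : Fin r × Fin r) (v : ℕ)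
    (h1 : 0 < v) (h2 : v < nu π c q) : iter π v q ∈ Jz c := by
  have h2' : v < sInf {ν : ℕ | 0 < ν ∧ iter π ν q ∈ Jp c ∪ Jm c} := h2
  have hn := Nat.notMem_of_lt_sInf h2'
  simp only [Set.mem_setOf_eq, not_and] at hn
  exact mem_Jz_of_not_mem c _ (hn h1)

lemma Jz0_sub_P (π : Equiv.Perm (Fin r)) (c : ℕ) (q' : Fin r × Fin r)
    (h : q' ∈ Jz0 π c) : Pq π c q' := by
  obtain ⟨q, ⟨hqm, hqp⟩, s, hs1, hs2, rfl⟩ := h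
  have hN := nu_mem π c q hqm
  have hsN : s < nu π c q := by omega
  refine ⟨nu_min π c q s (by omega) hsN, ?_, ?_⟩
  · refine ⟨nu π c q - s, by omega, ?_, ?_⟩
    · rw [iter_iter]
      have : nu π c q - s + s = nu π c q := by omega
      rw [this]
      exact hqp
    · intro v hv1 hv2
      rw [iter_iter]
      exact nu_min π c q (v + s) (by omega) (by omega)
  · refine ⟨s, hs1, ?_, ?_⟩
    · rw [iter_inv_iter π s s le_rfl]
      have : iter π (s - s) q = q := by simp [Nat.sub_self, iter]
      rw [this]
      exact hqm
    · intro v hv1 hv2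
      rw [iter_inv_iter π v s (by omega)]
      exact nu_min π c q (s - v) (by omega) (by omega)

lemma P_sub_Jz0 (π : Equiv.Perm (Fin r)) (c : ℕ) (q' : Fin r × Fin r)
    (h : Pq π c q') : q' ∈ Jz0 π c := by
  obtain ⟨hz, ⟨w, hw1, hwp, hwmid⟩, ⟨u, hu1, hum, humid⟩⟩ := h
  set q₀ := iter π⁻¹ u q' with hq₀
  have hq'eq : iter π u q₀ = q' := iter_apply_inv π u q'
  have hiter : ∀ v, 0 < v → v < u + w → iter π v q₀ ∈ Jz c := by
    intro v hv1 hv2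
    rcases lt_trichotomy v u with hlt | heq | hgt
    · rw [hq₀, iter_iter_inv π v u (by omega)]
      exact humid (u - v) (by omega) (by omega)
    · rw [heq, hq'eq]; exact hz
    · rw [hq₀, iter_gt_inv π v u (by omega)]
      exact hwmid (v - u) (by omega) (by omega)
  have hmem : iter π (u + w) q₀ ∈ Jp c := by
    have : iter π (u + w) q₀ = iter π w (iter π u q₀) := by
      rw [iter_iter, Nat.add_comm]
    rw [this, hq'eq]
    exact hwp
  have hnu : nu π c q₀ = u + w := by
    have hle : nu π c q₀ ≤ u + w :=
      Nat.sInf_le ⟨by omega, Set.mem_union_left _ hmem⟩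
    rcases Nat.lt_or_ge (nu π c q₀) (u + w) with hlt | hge
    · exfalso
      have h1 := nu_mem π c q₀ hum
      have h2 := hiter (nu π c q₀) h1.1 hlt
      exact not_mem_of_mem_Jz c _ h2 h1.2
    · omega
  refine ⟨q₀, ⟨hum, by rw [hnu]; exact hmem⟩, u, hu1, by rw [hnu]; omega, hq'eq.symm⟩

lemma P_ne (π : Equiv.Perm (Fin r)) (c : ℕ) (a b : Fin r) (h : Pq π c (a, b)) : a ≠ b := by
  obtain ⟨_, ⟨w, _, hwp, _⟩, _⟩ := h
  intro hab
  subst hab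
  simp only [Jp, iter, Set.mem_setOf_eq] at hwp
  omega

lemma Pq_trans (π : Equiv.Perm (Fin r)) (c : ℕ) (a b e : Fin r)
    (h1 : Pq π c (a, b)) (h2 : Pq π c (b, e)) : Pq π c (a, e) := by
  obtain ⟨hz1, ⟨w1, hw11, hw1p, hw1m⟩, ⟨u1, hu11, hu1m, hu1mid⟩⟩ := h1
  obtain ⟨hz2, ⟨w2, hw21, hw2p, hw2m⟩, ⟨u2, hu21, hu2m, hu2mid⟩⟩ := h2
  refine ⟨?_, ?_, ?_⟩
  · simp only [Jz, Set.mem_setOf_eq] at hz1 hz2 ⊢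
    omega
  · rcases lt_trichotomy w1 w2 with h | h | h
    · refine ⟨w1, hw11, ?_, ?_⟩
      · have hb := hw2m w1 hw11 h
        simp only [Jp, Jz, iter, Set.mem_setOf_eq] at hb hw1p ⊢
        omega
      · intro v hv1 hv2
        have ha := hw1m v hv1 hv2
        have hb := hw2m v hv1 (hv2.trans h)
        simp only [Jz, iter, Set.mem_setOf_eq] at ha hb ⊢
        omega
    · exfalso
      rw [h] at hw1p
      simp only [Jp, iter, Set.mem_setOf_eq] at hw1p hw2p
      omega
    · refine ⟨w2, hw21, ?_, ?_⟩
      · have ha := hw1m w2 hw21 h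
        simp only [Jp, Jz, iter, Set.mem_setOf_eq] at ha hw2p ⊢
        omega
      · intro v hv1 hv2
        have ha := hw1m v hv1 (hv2.trans h)
        have hb := hw2m v hv1 hv2
        simp only [Jz, iter, Set.mem_setOf_eq] at ha hb ⊢
        omega
  · rcases lt_trichotomy u1 u2 with h | h | h
    · refine ⟨u1, hu11, ?_, ?_⟩
      · have hb := hu2mid u1 hu11 h
        simp only [Jm, Jz, iter, Set.mem_setOf_eq] at hb hu1m ⊢
        omega
      · intro v hv1 hv2
        have ha := hu1mid v hv1 hv2
        have hb := hu2mid v hv1 (hv2.trans h)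
        simp only [Jz, iter, Set.mem_setOf_eq] at ha hb ⊢
        omega
    · exfalso
      rw [h] at hu1m
      simp only [Jm, iter, Set.mem_setOf_eq] at hu1m hu2m
      omega
    · refine ⟨u2, hu21, ?_, ?_⟩
      · have ha := hu1mid u2 hu21 h
        simp only [Jm, Jz, iter, Set.mem_setOf_eq] at ha hu2m ⊢
        omega
      · intro v hv1 hv2
        have ha := hu1mid v hv1 (hv2.trans h)
        have hb := hu2mid v hv1 hv2
        simp only [Jz, iter, Set.mem_setOf_eq] at ha hb ⊢
        omega

/-! ### Algebraic lemmas -/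

lemma spanUnits_mul_le' {k : Type*} [Field k] (A B C : Set (Fin r × Fin r))
    (h : ∀ a ∈ A, ∀ b ∈ B, a.2 = b.1 → (a.1, b.2) ∈ C) :
    spanUnits k A * spanUnits k B ≤ spanUnits k C := by
  rw [spanUnits, spanUnits, Submodule.span_mul_span, spanUnits]
  apply Submodule.span_le.2
  rintro x hx
  rw [Set.mem_mul] at hx
  obtain ⟨y, hy, z, hz, rfl⟩ := hx
  obtain ⟨qa, hqa, rfl⟩ := hy
  obtain ⟨qb, hqb, rfl⟩ := hz
  beta_reduce
  by_cases hbe : qa.2 = qb.1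
  · have heq : Matrix.single qa.1 qa.2 (1 : k) *
        Matrix.single qb.1 qb.2 (1 : k) =
        Matrix.single qa.1 qb.2 (1 : k) := by
      rw [hbe, Matrix.single_mul_single_same, one_mul]
    rw [heq]
    exact Submodule.subset_span ⟨(qa.1, qb.2), h _ hqa _ hqb hbe, rfl⟩
  · rw [Matrix.single_mul_single_of_ne (h := hbe)]
    exact Submodule.zero_mem _

lemma spanUnits_mono {k : Type*} [Field k] {A B : Set (Fin r × Fin r)} (h : A ⊆ B) :
    spanUnits k A ≤ spanUnits k B :=
  Submodule.span_mono (Set.image_mono h)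

/-- Pairs joined by a chain of length `n` through `S`. -/
def chainSet (S : Set (Fin r × Fin r)) (n : ℕ) : Set (Fin r × Fin r) :=
  {q | ∃ γ : ℕ → Fin r, γ 0 = q.1 ∧ γ n = q.2 ∧ ∀ i < n, (γ i, γ (i + 1)) ∈ S}

lemma subset_chainSet_one (S : Set (Fin r × Fin r)) : S ⊆ chainSet S 1 := by
  rintro ⟨a, b⟩ hab
  refine ⟨fun i => if i = 0 then a else b, by simp, by simp, ?_⟩
  intro i hi
  interval_cases i
  simpa using hab

lemma chainSet_mul (S : Set (Fin r × Fin r)) (n : ℕ) :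
    ∀ q ∈ chainSet S n, ∀ p ∈ S, q.2 = p.1 → (q.1, p.2) ∈ chainSet S (n + 1) := by
  rintro q ⟨γ, hγ0, hγn, hstep⟩ p hp hqp
  refine ⟨fun i => if i ≤ n then γ i else p.2, by simp [hγ0], by simp, ?_⟩
  intro i hi
  rcases Nat.lt_or_ge i n with hlt | hge
  · have h1 : i ≤ n := by omega
    have h2 : i + 1 ≤ n := by omega
    simp only [if_pos h1, if_pos h2]
    exact hstep i hlt
  · have hin : i = n := by omega
    subst hin
    have h2 : ¬ (i + 1 ≤ i) := by omega
    simp only [le_refl, if_pos, if_neg h2]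
    rw [hγn.trans hqp]
    exact hp

lemma pow_le_chain {k : Type*} [Field k] (S : Set (Fin r × Fin r)) (n : ℕ) :
    spanUnits k S ^ (n + 1) ≤ spanUnits k (chainSet S (n + 1)) := by
  induction n with
  | zero =>
    rw [pow_one]
    exact spanUnits_mono (subset_chainSet_one S)
  | succ n ih =>
    rw [pow_succ]
    calc spanUnits k S ^ (n + 1) * spanUnits k S
        ≤ spanUnits k (chainSet S (n + 1)) * spanUnits k S :=
          mul_le_mul' ih le_rfl
      _ ≤ spanUnits k (chainSet S (n + 2)) :=
          spanUnits_mul_le' _ _ _ (chainSet_mul S (n + 1))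

end Aux

lemma chainSet_empty (c d : ℕ) (hc : 0 < c) (hd : 0 < d)
    (π : Equiv.Perm (Fin (c + d))) :
    chainSet (Jz0 π c) (max c d) = ∅ := by
  set m := max c d with hm
  ext q
  simp only [Set.mem_empty_iff_false, iff_false]
  rintro ⟨γ, hγ0, hγm, hstep⟩
  have key : ∀ t : ℕ, ∀ i : ℕ, i + t + 1 ≤ m → Pq π c (γ i, γ (i + t + 1)) := by
    intro t
    induction t with
    | zero =>
      intro i hi
      have := Jz0_sub_P π c _ (hstep i (by omega))
      simpa using this
    | succ t ih =>
      intro i hi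
      have h1 := ih i (by omega)
      have h2 := Jz0_sub_P π c _ (hstep (i + t + 1) (by omega))
      have h3 := Pq_trans π c _ _ _ h1 h2
      have heq : i + (t + 1) + 1 = i + t + 1 + 1 := by omega
      rw [heq]
      exact h3
  have pairsP : ∀ i j : ℕ, i < j → j ≤ m → Pq π c (γ i, γ j) := by
    intro i j hij hjm
    have := key (j - i - 1) i (by omega)
    have heq : i + (j - i - 1) + 1 = j := by omega
    rwa [heq] at this
  have hinj : ∀ i j : ℕ, i ≤ m → j ≤ m → γ i = γ j → i = j := by
    intro i j hi hj hγ
    by_contra hne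
    rcases Nat.lt_or_ge i j with hlt | hge
    · exact P_ne π c _ _ (pairsP i j hlt hj) hγ
    · have hlt : j < i := by omega
      exact P_ne π c _ _ (pairsP j i hlt hi) hγ.symm
  have hside : ∀ j : ℕ, 1 ≤ j → j ≤ m →
      ((γ 0).val < c ∧ (γ j).val < c) ∨ (c ≤ (γ 0).val ∧ c ≤ (γ j).val) := by
    intro j h1 h2
    have := (pairsP 0 j h1 h2).1
    simpa [Jz] using this
  have hm1 : 1 ≤ m := by omega
  rcases Nat.lt_or_ge (γ 0).val c with hlow | hhigh
  · -- all γ j have value < c, so we embed Fin (m+1) into Fin c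
    have hall : ∀ j : ℕ, j ≤ m → (γ j).val < c := by
      intro j hj
      rcases Nat.eq_zero_or_pos j with rfl | hj1
      · exact hlow
      · rcases hside j hj1 hj with h | h
        · exact h.2
        · omega
    let f : Fin (m + 1) → Fin c := fun j => ⟨(γ j.val).val, hall j.val (by omega)⟩
    have hfinj : Function.Injective f := by
      intro i j hij
      have h1 := congrArg Fin.val hij
      have h1' : (γ i.val).val = (γ j.val).val := h1
      have h2 : γ i.val = γ j.val := Fin.ext h1'
      have := hinj i.val j.val (by omega) (by omega) h2
      exact Fin.ext this
    have := Fintype.card_le_of_injective f hfinj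
    simp only [Fintype.card_fin] at this
    omega
  · have hall : ∀ j : ℕ, j ≤ m → c ≤ (γ j).val := by
      intro j hj
      rcases Nat.eq_zero_or_pos j with rfl | hj1
      · exact hhigh
      · rcases hside j hj1 hj with h | h
        · omega
        · exact h.2
    let f : Fin (m + 1) → Fin d := fun j =>
      ⟨(γ j.val).val - c, by
        have h1 := hall j.val (by omega)
        have h2 := (γ j.val).isLt
        omega⟩
    have hfinj : Function.Injective f := by
      intro i j hij
      have h1 := congrArg Fin.val hij
      have h1' : (γ i.val).val - c = (γ j.val).val - c := h1
      have hi := hall i.val (by omega)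
      have hj := hall j.val (by omega)
      have h2 : γ i.val = γ j.val := Fin.ext (by omega)
      have := hinj i.val j.val (by omega) (by omega) h2
      exact Fin.ext this
    have := Fintype.card_le_of_injective f hfinj
    simp only [Fintype.card_fin] at this
    omega

theorem statement_3 (c d : ℕ) (hc : 0 < c) (hd : 0 < d)
    (π : Equiv.Perm (Fin (c + d))) (k : Type*) [Field k] :
    spanUnits k (Jz0 π c) * spanUnits k (Jz0 π c) ≤ spanUnits k (Jz0 π c) ∧
      spanUnits k (Jz0 π c) ^ max c d = ⊥ := by
  have hmul : ∀ a ∈ Jz0 π c, ∀ b ∈ Jz0 π c, a.2 = b.1 → (a.1, b.2) ∈ Jz0 π c := by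
    rintro ⟨a1, a2⟩ ha ⟨b1, b2⟩ hb hab
    simp only at hab
    subst hab
    exact P_sub_Jz0 π c _ (Pq_trans π c _ _ _ (Jz0_sub_P π c _ ha) (Jz0_sub_P π c _ hb))
  constructor
  · exact spanUnits_mul_le' _ _ _ hmul
  · set m := max c d with hm
    have hm1 : 1 ≤ m := by omega
    have hpow : spanUnits k (Jz0 π c) ^ m ≤ spanUnits k (chainSet (Jz0 π c) m) := by
      have := pow_le_chain (k := k) (Jz0 π c) (m - 1)
      have heq : m - 1 + 1 = m := by omega
      rwa [heq] at this
    rw [chainSet_empty c d hc hd π] at hpow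
    have hbot : spanUnits k (∅ : Set (Fin (c + d) × Fin (c + d))) = ⊥ := by
      simp [spanUnits]
    rw [hbot] at hpow
    exact le_bot_iff.mp hpow

end PaperPurity
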